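/- Let q ≥ 3 be an integer, let [ω₀, ω₁, …, ω_{q−1}] be a composition of n, and suppose gcd(n, Q) = 1, where Q is the product of all primes p with p ≤ q − 1. Then there exists a q-ary constant-composition code of length n with composition [ω₀, ω₁, …, ω_{q−1}], minimum distance at least 3, and size M satisfying M · n ≥ n!/(ω₀!·ω₁!⋯ω_{q−1}!). -/

import Mathlib

/-!
Group the words of composition `ω` by the checksum `∑ i * c i ∈ ZMod n`. The words form one
orbit of the permutations of the positions, so there are `n! / ∏ ωₐ!` of them, and by pigeonhole
some checksum class holds at least a `1/n` fraction. Two words of the same composition have the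
same symbol sum, so they cannot differ in exactly one position; if they differ exactly in
positions `i ≠ j`, equal symbol sums and equal checksums give `(i - j) * (u i - v i) = 0` in
`ZMod n`. As `0 < |u i - v i| < q` and `n` is prime to every prime below `q`, the factor
`u i - v i` is a unit, forcing `i = j`.
-/

open Finset

section Composition

variable {ι α : Type*} [Fintype ι] [DecidableEq α]

def HasComposition (ω : α → ℕ) (c : ι → α) : Prop :=
  ∀ a, #{i | c i = a} = ω a

instance [Fintype α] (ω : α → ℕ) : DecidablePred (HasComposition (ι := ι) ω) :=
  fun _ => Fintype.decidableForallFintype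

variable {ω : α → ℕ} {c u v : ι → α}

lemma hasComposition_comp_perm (σ : Equiv.Perm ι) :
    HasComposition ω (u ∘ σ) ↔ HasComposition ω u := by
  refine forall_congr' fun a => ?_
  rw [← Fintype.card_subtype, ← Fintype.card_subtype]
  exact Iff.of_eq <| congrArg (· = ω a) <| Fintype.card_congr <|
    σ.subtypeEquiv (p := fun i => u (σ i) = a) fun _ => Iff.rfl

lemma HasComposition.exists_perm_comp_eq (hu : HasComposition ω u) (hv : HasComposition ω v) :
    ∃ σ : Equiv.Perm ι, u ∘ σ = v :=
  ⟨Equiv.ofFiberEquiv fun a => Fintype.equivOfCardEq <| by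
      rw [Fintype.card_subtype, Fintype.card_subtype, hu, hv],
    funext fun i => Equiv.ofFiberEquiv_map _ i⟩

lemma HasComposition.sum_comp_eq {M : Type*} [AddCommMonoid M] [Fintype α]
    (hu : HasComposition ω u) (hv : HasComposition ω v) (f : α → M) :
    ∑ i, f (u i) = ∑ i, f (v i) := by
  rw [← sum_fiberwise' univ u f, ← sum_fiberwise' univ v f]
  exact sum_congr rfl fun a _ => by rw [sum_const, sum_const, hu a, hv a]

lemma exists_hasComposition [Fintype α] (hω : ∑ a, ω a = Fintype.card ι) :
    ∃ c : ι → α, HasComposition ω c := by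
  let e : (Σ a, Fin (ω a)) ≃ ι := Fintype.equivOfCardEq (by simp [hω])
  refine ⟨fun i => (e.symm i).1, fun a => ?_⟩
  rw [← Fintype.card_subtype, Fintype.card_congr ((e.symm.subtypeEquiv fun _ => Iff.rfl).trans
    (Equiv.sigmaSubtype a)), Fintype.card_fin]

open MulAction in
lemma HasComposition.orbit_eq (hc : HasComposition ω c) :
    orbit (Equiv.Perm ι)ᵈᵐᵃ c = {v | HasComposition ω v} := by
  ext v
  constructor
  · rintro ⟨σ, rfl⟩
    exact (hasComposition_comp_perm (DomMulAct.mk.symm σ)).2 hc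
  · intro hv
    obtain ⟨σ, hσ⟩ := hc.exists_perm_comp_eq hv
    exact ⟨DomMulAct.mk σ, hσ⟩

open MulAction in
theorem card_hasComposition [DecidableEq ι] [Fintype α] (hω : ∑ a, ω a = Fintype.card ι) :
    #{c : ι → α | HasComposition ω c} = Nat.multinomial univ ω := by
  obtain ⟨c, hc⟩ := exists_hasComposition hω
  have hstab : Nat.card (stabilizer (Equiv.Perm ι)ᵈᵐᵃ c) = ∏ a, (ω a).factorial := by
    rw [Nat.card_congr (DomMulAct.mk.symm.subtypeEquiv (p := (· ∈ stabilizer _ c))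
      (q := fun σ : Equiv.Perm ι => c ∘ σ = c) fun _ => Iff.rfl), Nat.card_eq_fintype_card,
      DomMulAct.stabilizer_card]
    exact prod_congr rfl fun a _ => by rw [Fintype.card_subtype, hc a]
  have h := Nat.card_congr (orbitProdStabilizerEquivGroup (Equiv.Perm ι)ᵈᵐᵃ c)
  rw [Nat.card_prod, hstab, hc.orbit_eq] at h
  rw [Nat.card_congr DomMulAct.mk.symm, Nat.card_perm, Nat.card_eq_fintype_card (α := ι), ← hω,
    ← Nat.multinomial_spec, mul_comm, Set.coe_ofPred, Nat.card_eq_fintype_card,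
    Fintype.card_subtype] at h
  exact Nat.eq_of_mul_eq_mul_left (prod_pos fun a _ => (ω a).factorial_pos) h

end Composition

lemma exists_card_le_card_fiber_mul {α β : Type*} [Fintype β] [Nonempty β] [DecidableEq β]
    (s : Finset α) (f : α → β) : ∃ y, #s ≤ #{x ∈ s | f x = y} * Fintype.card β := by
  obtain ⟨y, -, hy⟩ := exists_max_image univ (fun y => #{x ∈ s | f x = y}) univ_nonempty
  refine ⟨y, ?_⟩
  calc #s = ∑ y', #{x ∈ s | f x = y'} := card_eq_sum_card_fiberwise fun _ _ => mem_univ _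
    _ ≤ ∑ _y' : β, #{x ∈ s | f x = y} := sum_le_sum fun y' _ => hy y' (mem_univ _)
    _ = #{x ∈ s | f x = y} * Fintype.card β := by rw [sum_const, card_univ, smul_eq_mul, mul_comm]

lemma sum_filter_ne_eq_of_sum_eq {ι α M : Type*} [Fintype ι] [DecidableEq α]
    [AddCancelCommMonoid M] {u v : ι → α} (F : ι → α → M)
    (h : ∑ i, F i (u i) = ∑ i, F i (v i)) :
    ∑ i with u i ≠ v i, F i (u i) = ∑ i with u i ≠ v i, F i (v i) := by
  rw [← sum_filter_add_sum_filter_not univ (fun i => u i ≠ v i),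
    ← sum_filter_add_sum_filter_not univ (fun i => u i ≠ v i) (fun i => F i (v i))] at h
  refine add_right_cancel (h.trans (congrArg _ (sum_congr rfl fun i hi => ?_)))
  rw [not_not.1 (mem_filter.1 hi).2]

lemma Nat.coprime_of_lt_of_coprime_prod_primes {n q d : ℕ}
    (h : n.Coprime (∏ p ∈ (range q).filter Nat.Prime, p)) (hd : 0 < d) (hdq : d < q) :
    d.Coprime n :=
  Nat.coprime_of_dvd fun _ hp hpd hpn => hp.one_lt.ne' <| Nat.dvd_one.1 <| h ▸
    Nat.dvd_gcd hpn (dvd_prod_of_mem _ (mem_filter.2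
      ⟨mem_range.2 ((Nat.le_of_dvd hd hpd).trans_lt hdq), hp⟩))

lemma isUnit_natCast_sub_natCast {n q : ℕ} (hcop : ∀ d, 0 < d → d < q → d.Coprime n)
    {a b : ℕ} (ha : a < q) (hb : b < q) (hab : a ≠ b) : IsUnit ((a : ZMod n) - b) := by
  wlog hba : b < a generalizing a b
  · simpa using (this hb ha hab.symm (by omega)).neg
  rw [← Nat.cast_sub hba.le, ZMod.isUnit_iff_coprime]
  exact hcop _ (by omega) (by omega)

def checksum {n q : ℕ} (c : Fin n → Fin q) : ZMod n :=
  ∑ i : Fin n, ((i : ℕ) : ZMod n) * ((c i : ℕ) : ZMod n)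

theorem three_le_hammingDist_of_checksum_eq {n q : ℕ} {u v : Fin n → Fin q} (huv : u ≠ v)
    (hunit : ∀ a b : Fin q, a ≠ b → IsUnit (((a : ℕ) : ZMod n) - (b : ℕ)))
    (hsum : ∑ i, (u i : ℕ) = ∑ i, (v i : ℕ)) (hw : checksum u = checksum v) :
    3 ≤ hammingDist u v := by
  set D : Finset (Fin n) := {i | u i ≠ v i} with hD
  have hsumD := sum_filter_ne_eq_of_sum_eq (fun _ (a : Fin q) => (a : ℕ)) hsum
  have hwD := sum_filter_ne_eq_of_sum_eq (u := u) (v := v)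
    (fun (i : Fin n) (a : Fin q) => ((i : ℕ) : ZMod n) * ((a : ℕ) : ZMod n)) hw
  have hmem : ∀ i, i ∈ D ↔ u i ≠ v i := by simp [hD]
  have hD0 : D.Nonempty := by
    obtain ⟨i, hi⟩ := Function.ne_iff.1 huv
    exact ⟨i, (hmem i).2 hi⟩
  by_contra! hlt
  change #D < 3 at hlt
  interval_cases hcard : #D
  · exact hD0.ne_empty (card_eq_zero.1 hcard)
  · obtain ⟨i, hi⟩ := card_eq_one.1 hcard
    simp only [← hD, hi, sum_singleton] at hsumD
    exact (hmem i).1 (hi ▸ mem_singleton_self i) (Fin.ext hsumD)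
  · obtain ⟨i, j, hij, hij'⟩ := card_eq_two.1 hcard
    simp only [← hD, hij', sum_pair hij] at hsumD hwD
    have hzero : (((i : ℕ) : ZMod n) - (j : ℕ)) * (((u i : ℕ) : ZMod n) - (v i : ℕ)) = 0 := by
      have := congrArg (Nat.cast : ℕ → ZMod n) hsumD
      push_cast at this
      linear_combination hwD - ((j : ℕ) : ZMod n) * this
    have hi : u i ≠ v i := (hmem i).1 (hij' ▸ by simp)
    rw [(hunit _ _ hi).mul_left_eq_zero, sub_eq_zero, ZMod.natCast_eq_natCast_iff',
      Nat.mod_eq_of_lt i.isLt, Nat.mod_eq_of_lt j.isLt] at hzero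
    exact hij (Fin.ext hzero)

/-- Let `q ≥ 3`, let `ω` be a composition of `n`, and suppose
`gcd(n, Q) = 1` where `Q` is the product of all primes `p ≤ q - 1`. Then there is a
`q`-ary constant-composition code of length `n` with composition `ω`, minimum distance at
least `3`, and size `M` with `M · n ≥ n!/(ω₀!⋯ω_{q-1}!)`. -/
theorem stmt_8 (q n : ℕ) (hq : 3 ≤ q) (ω : Fin q → ℕ) (hω : ∑ a, ω a = n)
    (Q : ℕ) (hQ : Q = ∏ p ∈ (Finset.range q).filter Nat.Prime, p)
    (hgcd : Nat.gcd n Q = 1) :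
    ∃ C : Finset (Fin n → Fin q),
      (∀ c ∈ C, ∀ a : Fin q, (Finset.univ.filter (fun i => c i = a)).card = ω a) ∧
      (∀ u ∈ C, ∀ v ∈ C, u ≠ v → 3 ≤ hammingDist u v) ∧
      Nat.multinomial Finset.univ ω ≤ C.card * n := by
  have hcop : ∀ d, 0 < d → d < q → d.Coprime n := fun _ hd hdq =>
    Nat.coprime_of_lt_of_coprime_prod_primes (hQ ▸ hgcd) hd hdq
  have : NeZero n := ⟨by rintro rfl; exact absurd (hcop 2 two_pos (by omega)) (by norm_num)⟩
  obtain ⟨k, hk⟩ := exists_card_le_card_fiber_mul {c : Fin n → Fin q | HasComposition ω c}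
    checksum
  refine ⟨({c | HasComposition ω c ∧ checksum c = k} : Finset _),
    fun c hc => (mem_filter.1 hc).2.1, fun u hu v hv huv => ?_, ?_⟩
  · simp only [mem_filter, mem_univ, true_and] at hu hv
    exact three_le_hammingDist_of_checksum_eq huv
      (fun a b hab => isUnit_natCast_sub_natCast hcop a.isLt b.isLt (Fin.val_ne_of_ne hab))
      (hu.1.sum_comp_eq hv.1 _) (hu.2.trans hv.2.symm)
  · rw [← card_hasComposition (by rw [hω, Fintype.card_fin])]
    rwa [filter_filter, ZMod.card] at hk
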